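/- arXiv:1202.1741 — 2 statements merged into one kernel-verified Lean document; each statement's English description precedes it below -/
import Mathlib

section
/- If u, k, d are nonnegative integers with (u^2+3u+2)/2 ≤ k < ((u+1)^2+3(u+1)+2)/2 and 8k < d^2+2d, then 2k ≤ (u+1)d - u^2 + u + 2. -/
/-- If `u, k, d` are nonnegative integers with
`(u^2+3u+2)/2 ≤ k < ((u+1)^2+3(u+1)+2)/2` and `8k < d^2+2d`,
then `2k ≤ (u+1)d - u^2 + u + 2`. -/
theorem stmt_1 (u k d : ℕ)
    (h1 : u ^ 2 + 3 * u + 2 ≤ 2 * k)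
    (h2 : 2 * k < (u + 1) ^ 2 + 3 * (u + 1) + 2)
    (h3 : 8 * k < d ^ 2 + 2 * d) :
    (2 * k : ℤ) ≤ ((u : ℤ) + 1) * d - (u : ℤ) ^ 2 + u + 2 := by
  have hd : 2 * u + 3 ≤ d := by nlinarith [sq_nonneg (d - 2*u - 2)]
  have h1' : (u:ℤ) ^ 2 + 3 * u + 2 ≤ 2 * k := by exact_mod_cast h1
  have h2' : (2 * k : ℤ) < ((u:ℤ) + 1) ^ 2 + 3 * ((u:ℤ) + 1) + 2 := by exact_mod_cast h2
  have hd' : (2 * u + 3 : ℤ) ≤ d := by exact_mod_cast hd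
  nlinarith [mul_le_mul_of_nonneg_left hd' (by positivity : (0:ℤ) ≤ (u:ℤ)+1)]
end

section
/- Let f : ℕ → ℕ be the difference Hilbert function of a zero-dimensional scheme in P^2, so f(i) ≤ i+1, f has no internal zeros, and once f(j) ≤ f(j+1) fails it is non-increasing thereafter (f is an O-sequence for P^2). If f(i) = i+1 for i ≤ u, f(d+1) > 0, and Σ_i f(i) < (u+1)d - u^2 + u + 2 with u+1 ≤ d, then there exists j ≤ d with 0 < f(j) = f(j+1) ≤ u. -/
/-!
Suppose there is no such flat step. Past the first index after `u` where `f` falls to `u` or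
below, `f` has already dropped once, so it is non-increasing from there on; having no flat
steps, it strictly decreases down to `f (d + 1) ≥ 1`. Hence on `[0, d + 1]` the function `f`
dominates the trapezoid `i ↦ min (i + 1) (u + 1) (d + 2 - i)`. Raising the cap of a trapezoid
over `n` points from `a` to `a + 1` adds `(n - 2a)⁺ ≥ n - 2a`, so its area is at least
`a (n + 1 - a)`, which for `a = u + 1`, `n = d + 2` is `(u + 1) d - u² + u + 2`.
-/

open Finset

def trapezoid (a n i : ℕ) : ℕ := min (i + 1) (min a (n - i))

lemma trapezoid_succ (a n i : ℕ) :
    trapezoid (a + 1) n i = trapezoid a n i + if a ≤ i ∧ i + a < n then 1 else 0 := by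
  unfold trapezoid; split_ifs <;> omega

lemma mul_le_sum_trapezoid (a n : ℕ) :
    (a : ℤ) * (n + 1 - a) ≤ ∑ i ∈ range n, (trapezoid a n i : ℤ) := by
  induction a with
  | zero => simp [trapezoid]
  | succ a ih =>
    have hcard : #{i ∈ range n | a ≤ i ∧ i + a < n} = n - 2 * a := by
      rw [show n - 2 * a = n - a - a by omega, ← Nat.card_Ico a (n - a)]
      congr 1
      ext i
      simp only [mem_filter, mem_range, mem_Ico]
      omega
    have hstep : ∑ i ∈ range n, (trapezoid (a + 1) n i : ℤ)
        = ∑ i ∈ range n, (trapezoid a n i : ℤ) + (n - 2 * a : ℕ) := by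
      simp only [trapezoid_succ, Nat.cast_add, sum_add_distrib, ← hcard, card_filter,
        Nat.cast_sum]
    have hmiddle : (n : ℤ) - 2 * a ≤ (n - 2 * a : ℕ) := by omega
    rw [hstep]
    push_cast
    linarith

lemma exists_drop_of_lt {f : ℕ → ℕ} {a b : ℕ} (hab : a ≤ b) (hlt : f b < f a) :
    ∃ j, a ≤ j ∧ j < b ∧ f (j + 1) < f j := by
  induction b, hab using Nat.le_induction with
  | base => exact absurd hlt (lt_irrefl _)
  | succ b hab ih =>
    by_cases hdrop : f (b + 1) < f b
    · exact ⟨b, hab, b.lt_succ_self, hdrop⟩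
    · obtain ⟨j, haj, hjb, hj⟩ := ih (by omega)
      exact ⟨j, haj, by omega, hj⟩

lemma trapezoid_le {f : ℕ → ℕ} {u n : ℕ}
    (hdecr : ∀ j, f (j + 1) < f j → ∀ t, j ≤ t → f (t + 1) ≤ f t)
    (hini : ∀ i ≤ u, f i = i + 1) (hpos : ∀ i < n, 0 < f i)
    (hflat : ∀ j, j + 1 < n → f j = f (j + 1) → u < f (j + 1)) {i : ℕ} (hin : i < n) :
    trapezoid (u + 1) n i ≤ f i := by
  -- Below the cap, `f` is past a drop and has no flat steps, so it decreases strictly to `≥ 1`.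
  have htail : ∀ k i, n - 1 - i = k → u ≤ i → i < n → min (u + 1) (n - i) ≤ f i := by
    intro k
    induction k with
    | zero => intro i _ _ hin; have := hpos i hin; omega
    | succ k ih =>
      intro i hk hui hin
      by_cases hbig : u + 1 ≤ f i
      · exact min_le_of_left_le hbig
      have hnext := ih (i + 1) (by omega) (by omega) (by omega)
      obtain ⟨j, -, hji, hj⟩ := exists_drop_of_lt (f := f) hui (by rw [hini u le_rfl]; omega)
      have hle := hdecr j hj i hji.le
      have hne : f i ≠ f (i + 1) := fun heq => by have := hflat i (by omega) heq; omega
      omega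
  unfold trapezoid
  rcases le_or_gt i u with hiu | hui
  · rw [hini i hiu]; exact min_le_left _ _
  · exact (min_le_right _ _).trans (htail _ i rfl hui.le hin)

theorem stmt_10_general (f : ℕ → ℕ) (u d : ℕ)
    (hnozero : ∀ a, f a = 0 → ∀ b, a ≤ b → f b = 0)
    (hdecr : ∀ j, f (j + 1) < f j → ∀ t, j ≤ t → f (t + 1) ≤ f t)
    (hini : ∀ i ≤ u, f i = i + 1)
    (hend : 0 < f (d + 1))
    (hsum : ∃ T, (∀ i, T ≤ i → f i = 0) ∧
      (∑ i ∈ Finset.range T, (f i : ℤ)) < ((u : ℤ) + 1) * d - (u : ℤ) ^ 2 + u + 2) :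
    ∃ j ≤ d, 0 < f j ∧ f j = f (j + 1) ∧ f (j + 1) ≤ u := by
  by_contra! hflat
  obtain ⟨T, hT, hsumT⟩ := hsum
  have hpos : ∀ i < d + 2, 0 < f i := fun i hi =>
    Nat.pos_of_ne_zero fun h => hend.ne' (hnozero i h (d + 1) (by omega))
  have hTd : d + 2 ≤ T := by
    by_contra!
    have := hT (d + 1) (by omega)
    omega
  have hprofile (i : ℕ) (hi : i < d + 2) : trapezoid (u + 1) (d + 2) i ≤ f i :=
    trapezoid_le hdecr hini hpos (fun j hj heq => hflat j (by omega) (hpos j (by omega)) heq) hi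
  refine hsumT.not_ge ?_
  calc ((u : ℤ) + 1) * d - u ^ 2 + u + 2
      = (u + 1 : ℕ) * ((d + 2 : ℕ) + 1 - (u + 1 : ℕ)) := by push_cast; ring
    _ ≤ ∑ i ∈ range (d + 2), (trapezoid (u + 1) (d + 2) i : ℤ) := mul_le_sum_trapezoid _ _
    _ ≤ ∑ i ∈ range (d + 2), (f i : ℤ) :=
      sum_le_sum fun i hi => by exact_mod_cast hprofile i (mem_range.1 hi)
    _ ≤ ∑ i ∈ range T, (f i : ℤ) :=
      sum_le_sum_of_subset_of_nonneg (range_subset_range.2 hTd) fun _ _ _ => by positivity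

/-- Let `f : ℕ → ℕ` be an O-sequence for `P^2`: `f 0 = 1`,
`f i ≤ i+1`, `f i ≤ f (i-1) + 1`, no internal zeros, and once `f` fails to be
nondecreasing it is non-increasing thereafter. If `f i = i+1` for `i ≤ u`,
`f (d+1) > 0`, `u+1 ≤ d`, and `∑ f(i) < (u+1)d - u^2 + u + 2`, then there
exists `j ≤ d` with `0 < f j = f (j+1) ≤ u`. -/
theorem stmt_10 (f : ℕ → ℕ) (u d : ℕ) (hud : u + 1 ≤ d)
    (hf0 : f 0 = 1)
    (hbound : ∀ i, f i ≤ i + 1)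
    (hstep : ∀ i, 1 ≤ i → f i ≤ f (i - 1) + 1)
    (hnozero : ∀ a, f a = 0 → ∀ b, a ≤ b → f b = 0)
    (hdecr : ∀ j, f (j + 1) < f j → ∀ t, j ≤ t → f (t + 1) ≤ f t)
    (hini : ∀ i ≤ u, f i = i + 1)
    (hend : 0 < f (d + 1))
    (hsum : ∃ T, (∀ i, T ≤ i → f i = 0) ∧
      (∑ i ∈ Finset.range T, (f i : ℤ)) < ((u : ℤ) + 1) * d - (u : ℤ) ^ 2 + u + 2) :
    ∃ j ≤ d, 0 < f j ∧ f j = f (j + 1) ∧ f (j + 1) ≤ u :=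
  stmt_10_general f u d hnozero hdecr hini hend hsum
end
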